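/- For all integers α, m, u, w ≥ 0: ∑_{j=0}^{m} ∑_{l=1}^{j+1} (−1)^{m+j} · C(m, j) · C(j, l−1) · C(w+l−1, w) · C(α−j−1, l+u−j−1) = C(α−m−1, u) · C(w, m), where C(α−j−1, l+u−j−1) and C(α−m−1, u) are generalized binomial coefficients with (possibly negative) integer top. -/

import Mathlib

/-- The descending factorial `z(z-1)⋯(z-n+1)` of a rational number. -/
def descFac (z : ℚ) (n : ℕ) : ℚ := ∏ i ∈ Finset.range n, (z - i)

/-- The generalized binomial coefficient `C(z, n)` for `z ∈ ℚ`, `n ∈ ℤ`: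
`z(z-1)⋯(z-n+1)/n!` for `n ≥ 0`, and `0` for `n < 0`. -/
def qchoose (z : ℚ) (n : ℤ) : ℚ :=
  if 0 ≤ n then descFac z n.toNat / (Nat.factorial n.toNat : ℚ) else 0

/-!
Sum over `j` first. The trinomial revision `C(m,j) C(j,k) = C(m,k) C(m-k,j-k)` turns the inner
sum into an alternating sum `∑ᵢ (-1)ⁱ C(n,i) C(y-i, v-i)` in which top and bottom of the
generalized binomial coefficient move together; by Pascal's rule such a sum collapses to
`C(y-n, v)`, here `±C(α-m-1, u)`. What is left, `∑ₖ (-1)^(m+k) C(m,k) C(w+k,w)`, is the same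
kind of sum after reflecting `k ↦ m-k`, and equals `C(w,m)`.
-/

open Finset

lemma qchoose_natCast_eq_ringChoose (z : ℚ) (n : ℕ) : qchoose z n = Ring.choose z n := by
  rw [Ring.choose_eq_smul, ← Polynomial.aeval_eq_smeval, Polynomial.aeval_def,
    Polynomial.eval₂_eq_eval_map, descPochhammer_map, descPochhammer_eval_eq_prod_range]
  simp [qchoose, descFac, div_eq_inv_mul]

lemma qchoose_of_neg (z : ℚ) {n : ℤ} (hn : n < 0) : qchoose z n = 0 := by
  simp [qchoose, hn.not_ge]

lemma qchoose_natCast_natCast (n k : ℕ) : qchoose (n : ℚ) (k : ℤ) = n.choose k := by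
  rw [qchoose_natCast_eq_ringChoose, Ring.choose_natCast]

lemma qchoose_add_one (z : ℚ) (n : ℤ) :
    qchoose (z + 1) n = qchoose z n + qchoose z (n - 1) := by
  obtain hn | ⟨k, rfl⟩ := lt_or_ge n 0 |>.imp_right Int.eq_ofNat_of_zero_le
  · simp [qchoose_of_neg _ hn, qchoose_of_neg _ (show n - 1 < 0 by omega)]
  · cases k with
    | zero => simp [qchoose, descFac]
    | succ k =>
      simp only [Nat.cast_succ, add_sub_cancel_right]
      simp only [← Nat.cast_succ, qchoose_natCast_eq_ringChoose, Ring.choose_succ_succ, add_comm]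

lemma sum_range_choose_mul_alternating_qchoose (n : ℕ) (y : ℚ) (v : ℤ) :
    ∑ i ∈ range (n + 1), n.choose i * ((-1 : ℚ) ^ i * qchoose (y - i) (v - i)) =
      qchoose (y - n) v := by
  induction n generalizing y v with
  | zero => simp
  | succ n ih =>
    have hshift (i : ℕ) :
        (-1 : ℚ) ^ (i + 1) * qchoose (y - (i + 1 : ℕ)) (v - (i + 1 : ℕ)) =
          -((-1) ^ i * qchoose (y - 1 - i) (v - 1 - i)) := by
      push_cast
      rw [pow_succ]
      ring_nf
    rw [sum_choose_succ_mul (fun i _ => (-1 : ℚ) ^ i * qchoose (y - i) (v - i)) n]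
    simp only [hshift, mul_neg, sum_neg_distrib, ih]
    have hpascal := qchoose_add_one (y - (n + 1 : ℕ)) v
    push_cast at hpascal ⊢
    rw [show y - (n + 1) + 1 = y - n by ring] at hpascal
    rw [hpascal, show y - 1 - n = y - (n + 1) by ring]
    ring

lemma Finset.sum_range_choose_mul_choose_mul {R : Type*} [CommSemiring R] {m k : ℕ}
    (hkm : k ≤ m) (f : ℕ → R) :
    ∑ j ∈ range (m + 1), (m.choose j * j.choose k : R) * f j =
      m.choose k * ∑ i ∈ range (m - k + 1), (m - k).choose i * f (k + i) := by
  obtain ⟨n, rfl⟩ := Nat.exists_eq_add_of_le hkm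
  rw [add_assoc, sum_range_add, Nat.add_sub_cancel_left, mul_sum]
  rw [sum_eq_zero fun j hj => by simp [Nat.choose_eq_zero_of_lt (mem_range.1 hj)], zero_add]
  refine sum_congr rfl fun i _ => ?_
  have hrevision := Nat.choose_mul (n := k + n) (Nat.le_add_right k i)
  rw [Nat.add_sub_cancel_left, Nat.add_sub_cancel_left] at hrevision
  rw [← mul_assoc, ← Nat.cast_mul, hrevision, Nat.cast_mul]

lemma sum_range_alternating_choose_mul_choose_mul_qchoose (x : ℚ) (u : ℤ) {m k : ℕ}
    (hkm : k ≤ m) :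
    ∑ j ∈ range (m + 1),
        (m.choose j * j.choose k : ℚ) * ((-1) ^ (m + j) * qchoose (x - j - 1) (u + k - j)) =
      (-1) ^ (m + k) * m.choose k * qchoose (x - m - 1) u := by
  have hterm (i : ℕ) :
      (-1 : ℚ) ^ (m + (k + i)) * qchoose (x - (k + i : ℕ) - 1) (u + k - (k + i : ℕ)) =
        (-1) ^ (m + k) * ((-1) ^ i * qchoose (x - k - 1 - i) (u - i)) := by
    push_cast
    rw [← add_assoc, pow_add]
    ring_nf
  simp only [sum_range_choose_mul_choose_mul hkm, hterm, mul_left_comm _ ((-1 : ℚ) ^ (m + k)),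
    ← mul_sum, sum_range_choose_mul_alternating_qchoose]
  rw [Nat.cast_sub hkm]
  ring_nf

lemma sum_range_alternating_choose_mul_add_choose (m w : ℕ) :
    ∑ k ∈ range (m + 1), (-1 : ℚ) ^ (m + k) * m.choose k * (w + k).choose w = w.choose m := by
  have h := sum_range_choose_mul_alternating_qchoose m ((w + m : ℕ) : ℚ) m
  rw [← Nat.cast_sub (Nat.le_add_left m w), Nat.add_sub_cancel, qchoose_natCast_natCast,
    ← sum_range_reflect] at h
  rw [← h]
  refine sum_congr rfl fun k hk => ?_
  have hkm : k ≤ m := Nat.lt_succ_iff.1 (mem_range.1 hk)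
  have hsign : (-1 : ℚ) ^ (m + k) = (-1) ^ (m - k) := by
    rw [show m + k = m - k + 2 * k by omega, pow_add, pow_mul, neg_one_sq, one_pow, mul_one]
  rw [add_tsub_cancel_right, Nat.choose_symm hkm, hsign,
    ← Nat.cast_sub (by omega : m - k ≤ w + m), ← Nat.cast_sub (Nat.sub_le m k),
    Nat.sub_sub_self hkm, show w + m - (m - k) = w + k by omega, qchoose_natCast_natCast,
    Nat.choose_symm_add]
  ring

lemma Finset.sum_Icc_one_eq_sum_range {M : Type*} [AddCommMonoid M] (f : ℕ → M) (n : ℕ) :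
    ∑ l ∈ Icc 1 n, f l = ∑ k ∈ range n, f (k + 1) := by
  rw [← Finset.Ico_add_one_right_eq_Icc, sum_Ico_eq_sum_range]
  simp [add_comm]

/-- `∑_{j=0}^{m} ∑_{l=1}^{j+1} (-1)^{m+j} C(m,j) C(j,l-1) C(w+l-1,w) C(α-j-1, l+u-j-1)
  = C(α-m-1, u) C(w,m)`, with generalized binomial coefficients where the top may be
negative. -/
theorem stmt_16 (α m u w : ℕ) :
    ∑ j ∈ Finset.range (m + 1), ∑ l ∈ Finset.Icc 1 (j + 1),
        (-1 : ℚ) ^ (m + j) * (m.choose j : ℚ) * (j.choose (l - 1) : ℚ) *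
          ((w + l - 1).choose w : ℚ) *
          qchoose ((α : ℚ) - j - 1) ((l : ℤ) + u - j - 1) =
      qchoose ((α : ℚ) - m - 1) (u : ℤ) * (w.choose m : ℚ) := by
  have hreindex (j : ℕ) (hj : j ∈ range (m + 1)) : ∑ l ∈ Icc 1 (j + 1),
        (-1 : ℚ) ^ (m + j) * (m.choose j : ℚ) * (j.choose (l - 1) : ℚ) *
          ((w + l - 1).choose w : ℚ) * qchoose ((α : ℚ) - j - 1) ((l : ℤ) + u - j - 1) =
      ∑ k ∈ range (m + 1), ((w + k).choose w : ℚ) * ((m.choose j * j.choose k : ℚ) *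
        ((-1) ^ (m + j) * qchoose (α - j - 1) (u + k - j))) := by
    rw [sum_Icc_one_eq_sum_range]
    refine sum_subset (range_subset_range.2 (mem_range.1 hj)) (fun k _ hk => ?_) |>.trans ?_
    · simp [Nat.choose_eq_zero_of_lt (by simpa using hk : j < k)]
    · refine sum_congr rfl fun k _ => ?_
      simp only [Nat.add_sub_cancel, ← add_assoc]
      push_cast
      ring_nf
  calc _ = ∑ k ∈ range (m + 1), ((w + k).choose w : ℚ) * ∑ j ∈ range (m + 1),
          (m.choose j * j.choose k : ℚ) *
            ((-1) ^ (m + j) * qchoose (α - j - 1) (u + k - j)) := by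
        rw [sum_congr rfl hreindex, sum_comm]
        simp only [mul_sum]
    _ = ∑ k ∈ range (m + 1), ((w + k).choose w : ℚ) *
          ((-1) ^ (m + k) * m.choose k * qchoose (α - m - 1) u) :=
        sum_congr rfl fun k hk => by
          rw [sum_range_alternating_choose_mul_choose_mul_qchoose _ _
            (Nat.lt_succ_iff.1 (mem_range.1 hk))]
    _ = qchoose (α - m - 1) u *
          ∑ k ∈ range (m + 1), (-1 : ℚ) ^ (m + k) * m.choose k * (w + k).choose w := by
        rw [mul_sum]
        exact sum_congr rfl fun _ _ => by ring
    _ = _ := by rw [sum_range_alternating_choose_mul_add_choose]
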